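/- arXiv:1902.02774 — 4 statements merged into one kernel-verified Lean document; each statement's English description precedes it below -/
import Mathlib

section
/- With the minimax estimator L̂_δ from the modulus construction, its worst-case positive bias over the localized class 𝒢 is attained at G₋₁ and its worst-case negative bias at G₁; i.e., sup_{G ∈ 𝒢} Bias_G(L̂_δ) = Bias_{G₋₁}(L̂_δ) = -Bias_{G₁}(L̂_δ) = -inf_{G ∈ 𝒢} Bias_G(L̂_δ). -/
open scoped BigOperators

lemma aux_limit {δ ω' U T x : ℝ} (hδ : 0 < δ)
    (h : ∀ t : ℝ, t ∈ Set.Ioc (0:ℝ) 1 → 0 < δ^2 + 2*t*U + t^2*T →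
      t * x ≤ ω' * (Real.sqrt (δ^2 + 2*t*U + t^2*T) - δ)) :
    x ≤ ω' * U / δ := by
  set q : ℝ → ℝ := fun t => δ^2 + 2*t*U + t^2*T with hqdef
  set g : ℝ → ℝ := fun t => ω' * (2*U + t*T) / (Real.sqrt (q t) + δ) with hgdef
  have hq' : ∀ t, q t = δ^2 + 2*t*U + t^2*T := fun t => rfl
  have hq0 : q 0 = δ^2 := by rw [hq']; ring
  have hqc : Continuous q := by rw [hqdef]; fun_prop
  have hden0 : Real.sqrt (q 0) + δ = 2*δ := by
    rw [hq0, Real.sqrt_sq hδ.le]; ring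
  have hgc : ContinuousAt g 0 := by
    apply ContinuousAt.div
    · fun_prop
    · fun_prop
    · rw [hden0]; positivity
  have hg0 : g 0 = ω' * U / δ := by
    simp only [hgdef]
    rw [hden0, div_eq_div_iff (by positivity) hδ.ne']
    ring
  have htend : Filter.Tendsto g (nhdsWithin 0 (Set.Ioi 0)) (nhds (ω' * U / δ)) := by
    rw [← hg0]
    exact hgc.tendsto.mono_left nhdsWithin_le_nhds
  refine ge_of_tendsto htend ?_
  have h1 : ∀ᶠ t in nhdsWithin 0 (Set.Ioi 0), 0 < q t :=
    ((hqc.continuousAt (x := 0)).eventually_const_lt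
      (by rw [hq0]; positivity)).filter_mono nhdsWithin_le_nhds
  have h2 : Set.Ioc (0:ℝ) 1 ∈ nhdsWithin (0:ℝ) (Set.Ioi 0) := Ioc_mem_nhdsGT one_pos
  filter_upwards [h1, h2] with t hqt hts
  have hs2 : Real.sqrt (q t) * Real.sqrt (q t) = δ^2 + 2*t*U + t^2*T := by
    rw [Real.mul_self_sqrt hqt.le]
  have hsδ : Real.sqrt (q t) + δ ≠ 0 := by positivity
  have key : ω' * (Real.sqrt (q t) - δ) = t * g t := by
    simp only [hgdef]
    rw [mul_div_assoc', eq_div_iff hsδ]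
    linear_combination ω' * hs2
  have := h t hts hqt
  rw [← hq' t, key] at this
  exact le_of_mul_le_mul_left this hts.1

/-- The minimax estimator `L̂_δ` attains its worst-case positive bias over the
convex class `𝒢` at `G₂ = G₋₁` and its worst-case negative bias at `G₁`; moreover the
two extreme biases are negatives of each other.  Here `ω` is the modulus of continuity,
`ω'` a supergradient of `ω` at `δ`, `G₁, G₂ ∈ 𝒢` solve the modulus problem at `δ` with
binding constraint, and the bias of `L̂_δ` at `G` is
`Q₀ + Σ_k q_k ν_G(k) - L G` with `q, Q₀` given by the modulus construction. -/
theorem stmt5 {V : Type*} [AddCommGroup V] [Module ℝ V] {K : ℕ}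
    (Gset : Set V) (hconv : Convex ℝ Gset)
    (L : V →ᵃ[ℝ] ℝ) (nu : Fin K → (V →ᵃ[ℝ] ℝ)) (nubar : Fin K → ℝ)
    (hnubar : ∀ k, 0 < nubar k)
    (C : ℝ) (hbdd : ∀ G ∈ Gset, |L G| ≤ C)
    (ω : ℝ → ℝ)
    (hω : ω = fun δ : ℝ => sSup {d : ℝ | ∃ H₁ ∈ Gset, ∃ H₂ ∈ Gset,
        (∑ k, (nu k H₁ - nu k H₂) ^ 2 / nubar k ≤ δ ^ 2) ∧ d = L H₁ - L H₂})
    (δ ω' : ℝ) (hδ : 0 < δ)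
    (hsuper : ∀ δ' : ℝ, 0 < δ' → ω δ' ≤ ω δ + ω' * (δ' - δ))
    (G₁ G₂ : V) (hG₁ : G₁ ∈ Gset) (hG₂ : G₂ ∈ Gset)
    (hbind : ∑ k, (nu k G₁ - nu k G₂) ^ 2 / nubar k = δ ^ 2)
    (hmod : L G₁ - L G₂ = ω δ)
    (bias : V → ℝ)
    (hbias : bias = fun G =>
      ((L G₁ + L G₂) / 2
        - (ω' / δ) * ∑ k, (nu k G₁ - nu k G₂) * (nu k G₁ + nu k G₂) / (2 * nubar k))
      + (∑ k, ((ω' / δ) * ((nu k G₁ - nu k G₂) / nubar k)) * nu k G) - L G) :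
    (∀ G ∈ Gset, bias G ≤ bias G₂) ∧
    (∀ G ∈ Gset, bias G₁ ≤ bias G) ∧
    bias G₂ = -(bias G₁) := by
  have hne : ∀ k, nubar k ≠ 0 := fun k => (hnubar k).ne'
  have hbddS : ∀ δ' : ℝ, BddAbove {d : ℝ | ∃ H₁ ∈ Gset, ∃ H₂ ∈ Gset,
      (∑ k, (nu k H₁ - nu k H₂) ^ 2 / nubar k ≤ δ' ^ 2) ∧ d = L H₁ - L H₂} := by
    intro δ'
    refine ⟨2*C, ?_⟩
    rintro d ⟨H₁, h1, H₂, h2, -, rfl⟩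
    have b1 := abs_le.mp (hbdd H₁ h1)
    have b2 := abs_le.mp (hbdd H₂ h2)
    linarith [b1.1, b1.2, b2.1, b2.2]
  have hωle : ∀ H₁ ∈ Gset, ∀ H₂ ∈ Gset, ∀ δ' : ℝ,
      (∑ k, (nu k H₁ - nu k H₂) ^ 2 / nubar k ≤ δ' ^ 2) → L H₁ - L H₂ ≤ ω δ' := by
    intro H₁ h1 H₂ h2 δ' hle
    rw [hω]
    exact le_csSup (hbddS δ') ⟨H₁, h1, H₂, h2, hle, rfl⟩
  have hlinnu : ∀ (B G : V) (t : ℝ) (k : Fin K),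
      nu k (AffineMap.lineMap B G t) = nu k B + t * (nu k G - nu k B) := by
    intro B G t k
    rw [AffineMap.apply_lineMap, AffineMap.lineMap_apply_module]
    simp [smul_eq_mul]; ring
  have hlinL : ∀ (B G : V) (t : ℝ),
      L (AffineMap.lineMap B G t) = L B + t * (L G - L B) := by
    intro B G t
    rw [AffineMap.apply_lineMap, AffineMap.lineMap_apply_module]
    simp [smul_eq_mul]; ring
  -- worst positive bias at G₂
  have key1 : ∀ G ∈ Gset, L G₂ - L G ≤
      ω' * (-(∑ k, (nu k G₁ - nu k G₂) * (nu k G - nu k G₂) / nubar k)) / δ := by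
    intro G hG
    apply aux_limit hδ (T := ∑ k, (nu k G - nu k G₂) ^ 2 / nubar k)
    intro t ht hq
    have hGtm : AffineMap.lineMap G₂ G t ∈ Gset :=
      hconv.lineMap_mem hG₂ hG ⟨ht.1.le, ht.2⟩
    have hsum : ∑ k, (nu k G₁ - nu k (AffineMap.lineMap G₂ G t)) ^ 2 / nubar k
        = (∑ k, (nu k G₁ - nu k G₂) ^ 2 / nubar k)
          + 2*t*(-(∑ k, (nu k G₁ - nu k G₂) * (nu k G - nu k G₂) / nubar k))
          + t^2*(∑ k, (nu k G - nu k G₂) ^ 2 / nubar k) := by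
      rw [← Finset.sum_neg_distrib, Finset.mul_sum, Finset.mul_sum,
        ← Finset.sum_add_distrib, ← Finset.sum_add_distrib]
      refine Finset.sum_congr rfl fun k _ => ?_
      rw [hlinnu]
      ring
    have hcon : L G₁ - L (AffineMap.lineMap G₂ G t) ≤ ω (Real.sqrt (δ ^ 2 +
        2*t*(-(∑ k, (nu k G₁ - nu k G₂) * (nu k G - nu k G₂) / nubar k))
          + t^2*(∑ k, (nu k G - nu k G₂) ^ 2 / nubar k))) := by
      refine hωle _ hG₁ _ hGtm _ ?_
      rw [Real.sq_sqrt hq.le]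
      exact le_of_eq (by rw [hsum, hbind])
    have hsup := hsuper _ (Real.sqrt_pos.mpr hq)
    have hL := hlinL G₂ G t
    have hexp : t * (L G₂ - L G) =
        (L G₁ - L (AffineMap.lineMap G₂ G t)) - (L G₁ - L G₂) := by rw [hL]; ring
    rw [hexp]
    linarith [hcon, hsup, hmod]
  -- worst negative bias at G₁
  have key2 : ∀ G ∈ Gset, L G - L G₁ ≤
      ω' * (∑ k, (nu k G₁ - nu k G₂) * (nu k G - nu k G₁) / nubar k) / δ := by
    intro G hG
    apply aux_limit hδ (T := ∑ k, (nu k G - nu k G₁) ^ 2 / nubar k)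
    intro t ht hq
    have hGtm : AffineMap.lineMap G₁ G t ∈ Gset :=
      hconv.lineMap_mem hG₁ hG ⟨ht.1.le, ht.2⟩
    have hsum : ∑ k, (nu k (AffineMap.lineMap G₁ G t) - nu k G₂) ^ 2 / nubar k
        = (∑ k, (nu k G₁ - nu k G₂) ^ 2 / nubar k)
          + 2*t*(∑ k, (nu k G₁ - nu k G₂) * (nu k G - nu k G₁) / nubar k)
          + t^2*(∑ k, (nu k G - nu k G₁) ^ 2 / nubar k) := by
      rw [Finset.mul_sum, Finset.mul_sum,
        ← Finset.sum_add_distrib, ← Finset.sum_add_distrib]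
      refine Finset.sum_congr rfl fun k _ => ?_
      rw [hlinnu]
      ring
    have hcon : L (AffineMap.lineMap G₁ G t) - L G₂ ≤ ω (Real.sqrt (δ ^ 2 +
        2*t*(∑ k, (nu k G₁ - nu k G₂) * (nu k G - nu k G₁) / nubar k)
          + t^2*(∑ k, (nu k G - nu k G₁) ^ 2 / nubar k))) := by
      refine hωle _ hGtm _ hG₂ _ ?_
      rw [Real.sq_sqrt hq.le]
      exact le_of_eq (by rw [hsum, hbind])
    have hsup := hsuper _ (Real.sqrt_pos.mpr hq)
    have hL := hlinL G₁ G t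
    have hexp : t * (L G - L G₁) =
        (L (AffineMap.lineMap G₁ G t) - L G₂) - (L G₁ - L G₂) := by rw [hL]; ring
    rw [hexp]
    linarith [hcon, hsup, hmod]
  refine ⟨?_, ?_, ?_⟩
  · intro G hG
    have k1 := key1 G hG
    simp only [hbias]
    have hSsub : (∑ k, ((ω' / δ) * ((nu k G₁ - nu k G₂) / nubar k)) * nu k G)
        - (∑ k, ((ω' / δ) * ((nu k G₁ - nu k G₂) / nubar k)) * nu k G₂)
        = (ω'/δ) * ∑ k, (nu k G₁ - nu k G₂) * (nu k G - nu k G₂) / nubar k := by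
      rw [← Finset.sum_sub_distrib, Finset.mul_sum]
      exact Finset.sum_congr rfl fun k _ => by ring
    have hrel : ω' * (-(∑ k, (nu k G₁ - nu k G₂) * (nu k G - nu k G₂) / nubar k)) / δ
        = -((ω'/δ) * ∑ k, (nu k G₁ - nu k G₂) * (nu k G - nu k G₂) / nubar k) := by
      ring
    rw [hrel] at k1
    linarith [k1, hSsub]
  · intro G hG
    have k2 := key2 G hG
    simp only [hbias]
    have hSsub : (∑ k, ((ω' / δ) * ((nu k G₁ - nu k G₂) / nubar k)) * nu k G)
        - (∑ k, ((ω' / δ) * ((nu k G₁ - nu k G₂) / nubar k)) * nu k G₁)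
        = (ω'/δ) * ∑ k, (nu k G₁ - nu k G₂) * (nu k G - nu k G₁) / nubar k := by
      rw [← Finset.sum_sub_distrib, Finset.mul_sum]
      exact Finset.sum_congr rfl fun k _ => by ring
    have hrel : ω' * (∑ k, (nu k G₁ - nu k G₂) * (nu k G - nu k G₁) / nubar k) / δ
        = (ω'/δ) * ∑ k, (nu k G₁ - nu k G₂) * (nu k G - nu k G₁) / nubar k := by
      ring
    rw [hrel] at k2
    linarith [k2, hSsub]
  · simp only [hbias]
    have hkey3 : (∑ k, ((ω' / δ) * ((nu k G₁ - nu k G₂) / nubar k)) * nu k G₂)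
        + (∑ k, ((ω' / δ) * ((nu k G₁ - nu k G₂) / nubar k)) * nu k G₁)
        = 2*((ω'/δ) * ∑ k, (nu k G₁ - nu k G₂) * (nu k G₁ + nu k G₂) / (2 * nubar k)) := by
      rw [← Finset.sum_add_distrib, Finset.mul_sum, Finset.mul_sum]
      refine Finset.sum_congr rfl fun k _ => ?_
      have := hne k
      field_simp
      ring
    linarith [hkey3]
end

section
/- Among all estimators L̃ = Q̃₀ + (1/m)Σᵢ Q̃(Xᵢ) with Q̃ piecewise constant on the cells I_k and satisfying (1/m)∫ Q̃² f̄ ≤ Γ = ω'(δ)²/m, the estimator L̂_δ minimizes the worst-case squared bias over 𝒢: sup_{G∈𝒢} Bias_G(L̃)² ≥ sup_{G∈𝒢} Bias_G(L̂_δ)² = ((ω(δ) - δω'(δ))/2)². -/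
open scoped BigOperators

lemma aux_lim {x M t₀ : ℝ} (ht₀ : 0 < t₀) (hM : 0 ≤ M)
    (h : ∀ t, 0 < t → t ≤ t₀ → x ≤ M * t) : x ≤ 0 := by
  by_contra hx
  push_neg at hx
  have hM1 : (0:ℝ) < M + 1 := by linarith
  have ht : 0 < min t₀ (x / (M + 1)) := lt_min ht₀ (div_pos hx hM1)
  have h1 := h _ ht (min_le_left _ _)
  have h3 : M * min t₀ (x / (M + 1)) ≤ M * (x / (M + 1)) :=
    mul_le_mul_of_nonneg_left (min_le_right _ _) hM
  have h4 : M * (x / (M + 1)) < x := by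
    rw [show M * (x / (M + 1)) = M * x / (M + 1) from by ring, div_lt_iff₀ hM1]
    nlinarith
  linarith

set_option maxHeartbeats 1000000 in
lemma aux_core {V : Type*} [AddCommGroup V] [Module ℝ V] {K : ℕ}
    (Gset : Set V) (hconv : Convex ℝ Gset)
    (L : V →ᵃ[ℝ] ℝ) (nu : Fin K → (V →ᵃ[ℝ] ℝ)) (nubar : Fin K → ℝ)
    (hnubar : ∀ k, 0 < nubar k)
    (C : ℝ) (hbdd : ∀ G ∈ Gset, |L G| ≤ C)
    (ω : ℝ → ℝ)
    (hω : ω = fun δ : ℝ => sSup {d : ℝ | ∃ H₁ ∈ Gset, ∃ H₂ ∈ Gset,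
        (∑ k, (nu k H₁ - nu k H₂) ^ 2 / nubar k ≤ δ ^ 2) ∧ d = L H₁ - L H₂})
    (δ ω' : ℝ) (hδ : 0 < δ) (hω'0 : 0 ≤ ω')
    (hsuper : ∀ δ' : ℝ, 0 < δ' → ω δ' ≤ ω δ + ω' * (δ' - δ))
    (X Z : V) (hX : X ∈ Gset) (hZ : Z ∈ Gset)
    (hbind : ∑ k, (nu k X - nu k Z) ^ 2 / nubar k = δ ^ 2)
    (hmod : L X - L Z = ω δ)
    (G : V) (hG : G ∈ Gset) :
    L Z - L G + (ω' / δ) * ∑ k, (nu k X - nu k Z) * (nu k G - nu k Z) / nubar k ≤ 0 := by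
  obtain ⟨A, hA⟩ : ∃ A, ∑ k, (nu k X - nu k Z) * (nu k G - nu k Z) / nubar k = A := ⟨_, rfl⟩
  obtain ⟨B, hBdef⟩ : ∃ B, ∑ k, (nu k G - nu k Z) ^ 2 / nubar k = B := ⟨_, rfl⟩
  rw [hA]
  have hB : 0 ≤ B := by
    rw [← hBdef]
    exact Finset.sum_nonneg fun k _ => div_nonneg (sq_nonneg _) (hnubar k).le
  have hbdd2 : ∀ δ' : ℝ, BddAbove {d : ℝ | ∃ H₁ ∈ Gset, ∃ H₂ ∈ Gset,
      (∑ k, (nu k H₁ - nu k H₂) ^ 2 / nubar k ≤ δ' ^ 2) ∧ d = L H₁ - L H₂} := by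
    intro δ'
    refine ⟨2 * C, ?_⟩
    rintro d ⟨H₁, h1, H₂, h2, -, rfl⟩
    have e1 := abs_le.mp (hbdd H₁ h1)
    have e2 := abs_le.mp (hbdd H₂ h2)
    linarith [e1.1, e1.2, e2.1, e2.2]
  set t₀ := min 1 (δ ^ 2 / (2 * |A| + 2)) with ht₀def
  clear_value t₀
  have ht₀ : 0 < t₀ := by
    rw [ht₀def]
    refine lt_min one_pos (div_pos (pow_pos hδ 2) ?_)
    have := abs_nonneg A; linarith
  have key : ∀ t, 0 < t → t ≤ t₀ → L Z - L G + (ω' / δ) * A ≤ (ω' / (2 * δ) * B) * t := by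
    intro t ht ht'
    have ht1 : t ≤ 1 := ht'.trans (by rw [ht₀def]; exact min_le_left _ _)
    have ht2 : t ≤ δ ^ 2 / (2 * |A| + 2) := ht'.trans (by rw [ht₀def]; exact min_le_right _ _)
    set Gt := (1 - t) • Z + t • G with hGtdef
    clear_value Gt
    have hGtmem : Gt ∈ Gset := by
      rw [hGtdef]; exact hconv hZ hG (by linarith) ht.le (by ring)
    have hGteq : Gt = AffineMap.lineMap Z G t :=
      hGtdef.trans (AffineMap.lineMap_apply_module Z G t).symm
    have hν : ∀ m : Fin K, nu m Gt = nu m Z + t * (nu m G - nu m Z) := by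
      intro m
      rw [hGteq, AffineMap.apply_lineMap, AffineMap.lineMap_apply_module']
      simp [smul_eq_mul]; ring
    have hL : L Gt = L Z + t * (L G - L Z) := by
      rw [hGteq, AffineMap.apply_lineMap, AffineMap.lineMap_apply_module']
      simp [smul_eq_mul]; ring
    obtain ⟨dt, hdtdef⟩ : ∃ d, ∑ k, (nu k X - nu k Gt) ^ 2 / nubar k = d := ⟨_, rfl⟩
    have hdt : dt = δ ^ 2 - t * (2 * A) + t ^ 2 * B := by
      have step : ∀ k : Fin K, (nu k X - nu k Gt) ^ 2 / nubar k
          = (nu k X - nu k Z) ^ 2 / nubar k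
            - t * (2 * ((nu k X - nu k Z) * (nu k G - nu k Z) / nubar k))
            + t ^ 2 * ((nu k G - nu k Z) ^ 2 / nubar k) := by
        intro k
        have hk := (hnubar k).ne'
        rw [hν k]
        field_simp
        ring
      rw [← hdtdef, Finset.sum_congr rfl fun k _ => step k, Finset.sum_add_distrib,
        Finset.sum_sub_distrib, hbind]
      simp only [← Finset.mul_sum]
      rw [hA, hBdef]
    have habs : t * (2 * A) ≤ t * (2 * |A|) := by
      have := le_abs_self A
      nlinarith
    have hta : t * (2 * |A| + 2) ≤ δ ^ 2 := by
      rw [le_div_iff₀ (by positivity : (0:ℝ) < 2 * |A| + 2)] at ht2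
      linarith
    have hdtpos : 0 < dt := by
      rw [hdt]
      nlinarith [mul_nonneg (mul_nonneg ht.le ht.le) hB]
    set δ'' := Real.sqrt dt with hδ''def
    clear_value δ''
    have hδ''pos : 0 < δ'' := by rw [hδ''def]; exact Real.sqrt_pos.mpr hdtpos
    have hδ''sq : δ'' ^ 2 = dt := by rw [hδ''def]; exact Real.sq_sqrt hdtpos.le
    have hmem : L X - L Gt ≤ ω δ'' := by
      rw [hω]
      exact le_csSup (hbdd2 δ'') ⟨X, hX, Gt, hGtmem, by rw [hδ''sq, hdtdef], rfl⟩
    have hsup := hsuper δ'' hδ''pos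
    have hsqrt : δ'' - δ ≤ (dt - δ ^ 2) / (2 * δ) := by
      rw [le_div_iff₀ (by linarith : (0:ℝ) < 2 * δ)]
      nlinarith [sq_nonneg (δ'' - δ)]
    have hchain : L X - L Gt ≤ (L X - L Z) + ω' * ((dt - δ ^ 2) / (2 * δ)) := by
      have h1 : ω' * (δ'' - δ) ≤ ω' * ((dt - δ ^ 2) / (2 * δ)) :=
        mul_le_mul_of_nonneg_left hsqrt hω'0
      calc L X - L Gt ≤ ω δ'' := hmem
        _ ≤ ω δ + ω' * (δ'' - δ) := hsup
        _ ≤ (L X - L Z) + ω' * ((dt - δ ^ 2) / (2 * δ)) := by rw [hmod]; linarith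
    rw [hL, hdt] at hchain
    have e1 : ω' * ((δ ^ 2 - t * (2 * A) + t ^ 2 * B - δ ^ 2) / (2 * δ))
        = (ω' / (2 * δ) * B * t) * t - (ω' / δ * A) * t := by
      field_simp [hδ.ne']
      ring
    have hfin : (L Z - L G + ω' / δ * A) * t ≤ (ω' / (2 * δ) * B * t) * t := by
      rw [e1] at hchain
      nlinarith [hchain]
    exact le_of_mul_le_mul_right (by linarith [hfin]) ht
  have hM : 0 ≤ ω' / (2 * δ) * B := by positivity
  exact aux_lim ht₀ hM key

set_option maxHeartbeats 1000000 in
/-- Minimax bias optimality of `L̂_δ`: among all estimators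
`L̃ = Q̃₀ + (1/m) Σᵢ Q̃(Xᵢ)` with `Q̃` piecewise constant on the cells (values `q̃ k`)
and variance proxy `(1/m)∫ Q̃² f̄ = (1/m) Σ_k q̃_k² ν̄(k) ≤ Γ = ω'(δ)²/m`,
the estimator `L̂_δ` minimizes the worst-case squared bias over `𝒢`:
`sup_{G∈𝒢} Bias_G(L̃)² ≥ sup_{G∈𝒢} Bias_G(L̂_δ)² = ((ω(δ) - δω'(δ))/2)²`. -/
theorem stmt6 {V : Type*} [AddCommGroup V] [Module ℝ V] {K : ℕ}
    (Gset : Set V) (hconv : Convex ℝ Gset)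
    (L : V →ᵃ[ℝ] ℝ) (nu : Fin K → (V →ᵃ[ℝ] ℝ)) (nubar : Fin K → ℝ)
    (hnubar : ∀ k, 0 < nubar k)
    (C : ℝ) (hbdd : ∀ G ∈ Gset, |L G| ≤ C)
    (ω : ℝ → ℝ)
    (hω : ω = fun δ : ℝ => sSup {d : ℝ | ∃ H₁ ∈ Gset, ∃ H₂ ∈ Gset,
        (∑ k, (nu k H₁ - nu k H₂) ^ 2 / nubar k ≤ δ ^ 2) ∧ d = L H₁ - L H₂})
    (δ ω' : ℝ) (hδ : 0 < δ)
    (hsuper : ∀ δ' : ℝ, 0 < δ' → ω δ' ≤ ω δ + ω' * (δ' - δ))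
    (G₁ G₂ : V) (hG₁ : G₁ ∈ Gset) (hG₂ : G₂ ∈ Gset)
    (hbind : ∑ k, (nu k G₁ - nu k G₂) ^ 2 / nubar k = δ ^ 2)
    (hmod : L G₁ - L G₂ = ω δ)
    (biasHat : V → ℝ)
    (hbiasHat : biasHat = fun G =>
      ((L G₁ + L G₂) / 2
        - (ω' / δ) * ∑ k, (nu k G₁ - nu k G₂) * (nu k G₁ + nu k G₂) / (2 * nubar k))
      + (∑ k, ((ω' / δ) * ((nu k G₁ - nu k G₂) / nubar k)) * nu k G) - L G)
    (qt : Fin K → ℝ) (Qt₀ : ℝ)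
    (biasTilde : V → ℝ)
    (hbiasTilde : biasTilde = fun G => Qt₀ + (∑ k, qt k * nu k G) - L G)
    (hvar : ∑ k, (qt k) ^ 2 * nubar k ≤ ω' ^ 2) :
    (∃ G ∈ Gset, ((ω δ - δ * ω') / 2) ^ 2 ≤ (biasTilde G) ^ 2) ∧
    (∀ G ∈ Gset, (biasHat G) ^ 2 ≤ ((ω δ - δ * ω') / 2) ^ 2) ∧
    (∃ G ∈ Gset, (biasHat G) ^ 2 = ((ω δ - δ * ω') / 2) ^ 2) := by
  have hbddS : ∀ δ' : ℝ, BddAbove {d : ℝ | ∃ H₁ ∈ Gset, ∃ H₂ ∈ Gset,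
      (∑ k, (nu k H₁ - nu k H₂) ^ 2 / nubar k ≤ δ' ^ 2) ∧ d = L H₁ - L H₂} := by
    intro δ'
    refine ⟨2 * C, ?_⟩
    rintro d ⟨H₁, h1, H₂, h2, -, rfl⟩
    have e1 := abs_le.mp (hbdd H₁ h1)
    have e2 := abs_le.mp (hbdd H₂ h2)
    linarith [e1.1, e1.2, e2.1, e2.2]
  have hω'0 : 0 ≤ ω' := by
    have h1 : L G₁ - L G₂ ≤ ω (2 * δ) := by
      rw [hω]
      exact le_csSup (hbddS (2 * δ)) ⟨G₁, hG₁, G₂, hG₂, by rw [hbind]; nlinarith, rfl⟩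
    have h2 := hsuper (2 * δ) (by linarith)
    by_contra hneg
    push_neg at hneg
    have h3 : ω' * (2 * δ - δ) < 0 := by nlinarith
    linarith [hmod ▸ h1]
  have hωnn : ∀ t : ℝ, 0 < t → 0 ≤ ω t := by
    intro t ht
    rw [hω]
    refine le_csSup (hbddS t) ⟨G₁, hG₁, G₁, hG₁, ?_, (sub_self _).symm⟩
    simpa using sq_nonneg t
  have hr : 0 ≤ ω δ - δ * ω' := by
    have h : ∀ t, 0 < t → t ≤ 1 → δ * ω' - ω δ ≤ ω' * t := by
      intro t ht _
      have h1 := hsuper t ht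
      have h2 := hωnn t ht
      linarith
    have := aux_lim one_pos hω'0 h
    linarith
  have hBG : ∀ G : V, biasHat G = (L G₁ + L G₂) / 2
      + (ω' / δ) * ((∑ k, (nu k G₁ - nu k G₂) * (nu k G - nu k G₂) / nubar k) - δ ^ 2 / 2)
      - L G := by
    intro G
    rw [hbiasHat]
    simp only
    have e : ∑ k, ((ω' / δ) * ((nu k G₁ - nu k G₂) / nubar k)) * nu k G
        = (ω' / δ) * ∑ k, (nu k G₁ - nu k G₂) * nu k G / nubar k := by
      rw [Finset.mul_sum]
      exact Finset.sum_congr rfl fun k _ => by ring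
    have e2 : ∑ k, (nu k G₁ - nu k G₂) * nu k G / nubar k
        - ∑ k, (nu k G₁ - nu k G₂) * (nu k G₁ + nu k G₂) / (2 * nubar k)
        = (∑ k, (nu k G₁ - nu k G₂) * (nu k G - nu k G₂) / nubar k) - δ ^ 2 / 2 := by
      rw [← hbind, Finset.sum_div, ← Finset.sum_sub_distrib, ← Finset.sum_sub_distrib]
      refine Finset.sum_congr rfl fun k _ => ?_
      have hk := (hnubar k).ne'
      field_simp
      ring
    rw [e, show (∑ k, (nu k G₁ - nu k G₂) * (nu k G - nu k G₂) / nubar k) - δ ^ 2 / 2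
      = ∑ k, (nu k G₁ - nu k G₂) * nu k G / nubar k
        - ∑ k, (nu k G₁ - nu k G₂) * (nu k G₁ + nu k G₂) / (2 * nubar k) from e2.symm]
    ring
  have hhalf : (ω' / δ) * (δ ^ 2 / 2) = δ * ω' / 2 := by
    field_simp
  refine ⟨?_, ?_, ?_⟩
  · -- part 1
    obtain ⟨s, hs⟩ : ∃ s, ∑ k, qt k * (nu k G₁ - nu k G₂) = s := ⟨_, rfl⟩
    have hcs : s ^ 2 ≤ ω' ^ 2 * δ ^ 2 := by
      have h1 := Finset.sum_mul_sq_le_sq_mul_sq Finset.univ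
        (fun k => qt k * Real.sqrt (nubar k))
        (fun k => (nu k G₁ - nu k G₂) / Real.sqrt (nubar k))
      have e1 : ∀ k : Fin K, (qt k * Real.sqrt (nubar k))
          * ((nu k G₁ - nu k G₂) / Real.sqrt (nubar k)) = qt k * (nu k G₁ - nu k G₂) := by
        intro k
        have h2 : Real.sqrt (nubar k) ≠ 0 := (Real.sqrt_pos.mpr (hnubar k)).ne'
        field_simp
      have e2 : ∀ k : Fin K, (qt k * Real.sqrt (nubar k)) ^ 2 = qt k ^ 2 * nubar k := by
        intro k; rw [mul_pow, Real.sq_sqrt (hnubar k).le]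
      have e3 : ∀ k : Fin K, ((nu k G₁ - nu k G₂) / Real.sqrt (nubar k)) ^ 2
          = (nu k G₁ - nu k G₂) ^ 2 / nubar k := by
        intro k; rw [div_pow, Real.sq_sqrt (hnubar k).le]
      rw [Finset.sum_congr rfl fun k _ => e1 k, Finset.sum_congr rfl fun k _ => e2 k,
        Finset.sum_congr rfl fun k _ => e3 k, hs, hbind] at h1
      calc s ^ 2 ≤ (∑ k, qt k ^ 2 * nubar k) * δ ^ 2 := h1
        _ ≤ ω' ^ 2 * δ ^ 2 := mul_le_mul_of_nonneg_right hvar (sq_nonneg δ)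
    have hsle : s ≤ ω' * δ := by
      nlinarith [mul_nonneg hω'0 hδ.le, sq_nonneg (s - ω' * δ), sq_nonneg (s + ω' * δ)]
    have hdiffsum : ∑ k, qt k * nu k G₁ - ∑ k, qt k * nu k G₂ = s := by
      rw [← hs, ← Finset.sum_sub_distrib]
      exact Finset.sum_congr rfl fun k _ => (mul_sub _ _ _).symm
    have hdiff : biasTilde G₂ - biasTilde G₁ = ω δ - s := by
      rw [hbiasTilde]
      simp only
      rw [← hmod]
      linarith [hdiffsum]
    by_cases hb : (ω δ - δ * ω') / 2 ≤ biasTilde G₂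
    · exact ⟨G₂, hG₂, by nlinarith [hr, hb]⟩
    · push_neg at hb
      refine ⟨G₁, hG₁, ?_⟩
      have hb1 : biasTilde G₁ ≤ biasTilde G₂ - (ω δ - δ * ω') := by linarith [hdiff, hsle]
      nlinarith [hb, hr, hb1]
  · -- part 2
    intro G hG
    have case1 := aux_core Gset hconv L nu nubar hnubar C hbdd ω hω δ ω' hδ hω'0 hsuper
      G₁ G₂ hG₁ hG₂ hbind hmod G hG
    have hswap : ∀ H₁ H₂ : V, ∑ k, (nu k H₁ - nu k H₂) ^ 2 / nubar k
        = ∑ k, (nu k H₂ - nu k H₁) ^ 2 / nubar k := fun H₁ H₂ =>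
      Finset.sum_congr rfl fun k _ => by
        rw [show (nu k H₁ - nu k H₂) ^ 2 = (nu k H₂ - nu k H₁) ^ 2 from by ring]
    have hbdd' : ∀ H ∈ Gset, |(-L : V →ᵃ[ℝ] ℝ) H| ≤ C := by
      intro H hH
      simp only [AffineMap.coe_neg, Pi.neg_apply, abs_neg]
      exact hbdd H hH
    have hω2 : ω = fun δ'' : ℝ => sSup {d : ℝ | ∃ H₁ ∈ Gset, ∃ H₂ ∈ Gset,
        (∑ k, (nu k H₁ - nu k H₂) ^ 2 / nubar k ≤ δ'' ^ 2)
          ∧ d = (-L : V →ᵃ[ℝ] ℝ) H₁ - (-L : V →ᵃ[ℝ] ℝ) H₂} := by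
      rw [hω]
      funext δ''
      congr 1
      ext d
      simp only [Set.mem_setOf_eq, AffineMap.coe_neg, Pi.neg_apply]
      constructor
      · rintro ⟨H₁, h1, H₂, h2, hc, rfl⟩
        exact ⟨H₂, h2, H₁, h1, by rw [hswap H₂ H₁]; exact hc, by ring⟩
      · rintro ⟨H₁, h1, H₂, h2, hc, rfl⟩
        exact ⟨H₂, h2, H₁, h1, by rw [hswap H₂ H₁]; exact hc, by ring⟩
    have hmod' : (-L : V →ᵃ[ℝ] ℝ) G₂ - (-L : V →ᵃ[ℝ] ℝ) G₁ = ω δ := by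
      simp only [AffineMap.coe_neg, Pi.neg_apply]
      linarith [hmod]
    have hbind' : ∑ k, (nu k G₂ - nu k G₁) ^ 2 / nubar k = δ ^ 2 := by
      rw [← hswap G₁ G₂, hbind]
    have case2 := aux_core Gset hconv (-L) nu nubar hnubar C hbdd' ω hω2 δ ω' hδ hω'0 hsuper
      G₂ G₁ hG₂ hG₁ hbind' hmod' G hG
    simp only [AffineMap.coe_neg, Pi.neg_apply] at case2
    have hnegsum : ∑ k, (nu k G₂ - nu k G₁) * (nu k G - nu k G₁) / nubar k
        = - ∑ k, (nu k G₁ - nu k G₂) * (nu k G - nu k G₁) / nubar k := by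
      rw [← Finset.sum_neg_distrib]
      exact Finset.sum_congr rfl fun k _ => by ring
    rw [hnegsum, mul_neg] at case2
    have hAA' : ∑ k, (nu k G₁ - nu k G₂) * (nu k G - nu k G₂) / nubar k
        = (∑ k, (nu k G₁ - nu k G₂) * (nu k G - nu k G₁) / nubar k) + δ ^ 2 := by
      rw [← hbind, ← Finset.sum_add_distrib]
      refine Finset.sum_congr rfl fun k _ => ?_
      have hk := (hnubar k).ne'
      field_simp
      ring
    have expand : (ω' / δ) * ((∑ k, (nu k G₁ - nu k G₂) * (nu k G - nu k G₂) / nubar k) - δ ^ 2 / 2)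
        = (ω' / δ) * (∑ k, (nu k G₁ - nu k G₂) * (nu k G - nu k G₂) / nubar k) - δ * ω' / 2 := by
      rw [mul_sub, hhalf]
    have e4 : (ω' / δ) * (∑ k, (nu k G₁ - nu k G₂) * (nu k G - nu k G₂) / nubar k)
        = (ω' / δ) * (∑ k, (nu k G₁ - nu k G₂) * (nu k G - nu k G₁) / nubar k) + δ * ω' := by
      rw [hAA', mul_add, show (ω' / δ) * δ ^ 2 = δ * ω' from by field_simp]
    have hBGG := hBG G
    have hub : biasHat G ≤ (ω δ - δ * ω') / 2 := by
      rw [hBGG, ← hmod]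
      linarith [case1, expand]
    have hlb : -((ω δ - δ * ω') / 2) ≤ biasHat G := by
      rw [hBGG, ← hmod]
      linarith [case2, expand, e4]
    nlinarith [hub, hlb, hr]
  · -- part 3
    refine ⟨G₂, hG₂, ?_⟩
    have hA0 : ∑ k, (nu k G₁ - nu k G₂) * (nu k G₂ - nu k G₂) / nubar k = 0 := by simp
    have h1 := hBG G₂
    rw [hA0] at h1
    have h2 : biasHat G₂ = (ω δ - δ * ω') / 2 := by
      rw [h1, ← hmod]
      have h3 : (ω' / δ) * (0 - δ ^ 2 / 2) = -(δ * ω' / 2) := by field_simp; ring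
      linarith [h3]
    rw [h2]
end

section
/- The convolution of the standard normal density φ with the j-th Hermite function h_j satisfies φ ⋆ h_j(x) = (2 π^{1/2} 2^j j!)^{-1/2} · exp(-x²/4) · x^j. -/
open MeasureTheory

/-- Physicists' Hermite polynomial `H_j(x) = (-1)^j e^{x²} (d^j/dx^j) e^{-x²}`. -/
noncomputable def physHermite (j : ℕ) (x : ℝ) : ℝ :=
  (-1 : ℝ) ^ j * Real.exp (x ^ 2) * iteratedDeriv j (fun y : ℝ => Real.exp (-(y ^ 2))) x

/-- Hermite function `h_j(x) = (2^j j! √π)^{-1/2} H_j(x) e^{-x²/2}`. -/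
noncomputable def hermiteFun (j : ℕ) (x : ℝ) : ℝ :=
  (Real.sqrt (2 ^ j * (Nat.factorial j : ℝ) * Real.sqrt Real.pi))⁻¹
    * physHermite j x * Real.exp (-(x ^ 2) / 2)

/-!
Completing the square, `e^{-μ²/2} e^{-(x-μ)²/2} = e^{-x²/4} e^{-(μ-x/2)²}`, so the convolution
is `e^{-x²/4}` times the Gaussian moment `∫ H_j(v + a) e^{-v²} dv` at `a = x/2`. That moment is
`(2a)^j √π`: by the recurrence `H_{j+1} = 2X H_j - H_j'` it equals `2a` times the previous one
plus the integral of the derivative `(H_j(v + a) e^{-v²})'`, which vanishes.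
-/

open Polynomial Real

noncomputable def physHermitePoly : ℕ → ℝ[X]
  | 0 => 1
  | n + 1 => C 2 * X * physHermitePoly n - derivative (physHermitePoly n)

theorem hasDerivAt_eval_mul_exp_neg_sq (p : ℝ[X]) (x : ℝ) :
    HasDerivAt (fun y => p.eval y * exp (-y ^ 2))
      ((p.derivative.eval x - 2 * x * p.eval x) * exp (-x ^ 2)) x := by
  have hsq : HasDerivAt (fun y : ℝ => -y ^ 2) (-(2 * x)) x := by
    simpa using (hasDerivAt_pow 2 x).fun_neg
  exact ((p.hasDerivAt x).mul hsq.exp).congr_deriv (by ring)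

theorem iterate_deriv_exp_neg_sq (n : ℕ) (x : ℝ) :
    deriv^[n] (fun y => exp (-y ^ 2)) x
      = (-1) ^ n * (physHermitePoly n).eval x * exp (-x ^ 2) := by
  induction n generalizing x with
  | zero => simp [physHermitePoly]
  | succ n ih =>
    have hfun : deriv^[n] (fun y => exp (-y ^ 2))
        = fun y => (-1) ^ n * ((physHermitePoly n).eval y * exp (-y ^ 2)) := by
      funext y; rw [ih, mul_assoc]
    rw [Function.iterate_succ_apply', hfun,
      ((hasDerivAt_eval_mul_exp_neg_sq _ x).const_mul _).deriv]
    simp only [physHermitePoly, eval_sub, eval_mul, eval_C, eval_X, pow_succ]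
    ring

theorem physHermite_eq_eval (n : ℕ) (x : ℝ) :
    physHermite n x = (physHermitePoly n).eval x := by
  have hexp : exp (x ^ 2) * exp (-x ^ 2) = 1 := by rw [← exp_add]; simp
  rw [physHermite, iteratedDeriv_eq_iterate, iterate_deriv_exp_neg_sq]
  calc (-1) ^ n * exp (x ^ 2) * ((-1) ^ n * (physHermitePoly n).eval x * exp (-x ^ 2))
      = ((-1) ^ n) ^ 2 * (exp (x ^ 2) * exp (-x ^ 2)) * (physHermitePoly n).eval x := by ring
    _ = (physHermitePoly n).eval x := by rw [hexp, ← pow_mul, Even.neg_one_pow ⟨n, by ring⟩]; ring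

theorem integrable_eval_mul_exp_neg_sq (p : ℝ[X]) :
    Integrable fun v => p.eval v * exp (-v ^ 2) := by
  induction p using Polynomial.induction_on' with
  | add p q hp hq => simpa [add_mul] using hp.fun_add hq
  | monomial n a =>
    have hpow : Integrable fun v : ℝ => v ^ n * exp (-1 * v ^ 2) := by
      simpa [rpow_natCast] using integrable_rpow_mul_exp_neg_mul_sq one_pos
        (s := n) (by linarith [n.cast_nonneg (α := ℝ)])
    simpa [mul_assoc] using hpow.const_mul a

theorem integrable_eval_derivative_sub_mul_exp_neg_sq (p : ℝ[X]) :
    Integrable fun v => (p.derivative.eval v - 2 * v * p.eval v) * exp (-v ^ 2) := by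
  have h := integrable_eval_mul_exp_neg_sq (p.derivative - C 2 * X * p)
  simp only [eval_sub, eval_mul, eval_C, eval_X] at h
  exact h

theorem integral_eval_derivative_sub_mul_exp_neg_sq (p : ℝ[X]) :
    ∫ v, (p.derivative.eval v - 2 * v * p.eval v) * exp (-v ^ 2) = 0 :=
  integral_eq_zero_of_hasDerivAt_of_integrable (hasDerivAt_eval_mul_exp_neg_sq p)
    (integrable_eval_derivative_sub_mul_exp_neg_sq p) (integrable_eval_mul_exp_neg_sq p)

theorem integral_physHermitePoly_eval_add_mul_exp_neg_sq (n : ℕ) (a : ℝ) :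
    ∫ v, (physHermitePoly n).eval (v + a) * exp (-v ^ 2) = (2 * a) ^ n * √π := by
  induction n with
  | zero => simpa [physHermitePoly] using integral_gaussian 1
  | succ n ih =>
    set q := (physHermitePoly n).comp (X + C a)
    have hq : ∀ v, q.eval v = (physHermitePoly n).eval (v + a) := by simp [q]
    have hq' : ∀ v, q.derivative.eval v = (physHermitePoly n).derivative.eval (v + a) := by
      simp [q, derivative_comp]
    have hrec : ∀ v, (physHermitePoly (n + 1)).eval (v + a) * exp (-v ^ 2)
        = 2 * a * (q.eval v * exp (-v ^ 2))
          - (q.derivative.eval v - 2 * v * q.eval v) * exp (-v ^ 2) := by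
      intro v
      simp only [physHermitePoly, eval_sub, eval_mul, eval_C, eval_X, hq, hq']
      ring
    simp_rw [hrec]
    rw [integral_sub ((integrable_eval_mul_exp_neg_sq q).const_mul _)
        (integrable_eval_derivative_sub_mul_exp_neg_sq q),
      integral_eval_derivative_sub_mul_exp_neg_sq, integral_const_mul]
    simp_rw [hq, ih]
    ring

theorem integral_physHermitePoly_eval_mul_exp_neg_sub_sq (n : ℕ) (a : ℝ) :
    ∫ μ, (physHermitePoly n).eval μ * exp (-(μ - a) ^ 2) = (2 * a) ^ n * √π := by
  rw [← integral_add_right_eq_self _ a, ← integral_physHermitePoly_eval_add_mul_exp_neg_sq]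
  simp

theorem inv_sqrt_mul_inv_sqrt_mul_sqrt_pi {a b : ℝ} (ha : 0 ≤ a) (hb : 0 ≤ b) :
    (√(a * b * √π))⁻¹ * (√(2 * π))⁻¹ * √π = (√(2 * √π * a * b))⁻¹ := by
  have hπ : √π * √π = π := mul_self_sqrt pi_pos.le
  have hsplit : √(a * b * √π) * √(2 * π) = √(2 * √π * a * b) * √π := by
    rw [← sqrt_mul (by positivity), ← sqrt_mul (by positivity), ← hπ]
    ring_nf
  rw [← mul_inv, hsplit, mul_inv, mul_assoc, inv_mul_cancel₀ (sqrt_pos.2 pi_pos).ne', mul_one]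

/-- Convolution of the standard normal density `φ` with the `j`-th Hermite function:
`(φ ⋆ h_j)(x) = (2 π^{1/2} 2^j j!)^{-1/2} e^{-x²/4} x^j`. -/
theorem stmt11 (j : ℕ) (x : ℝ) :
    (∫ μ : ℝ, hermiteFun j μ * ((Real.sqrt (2 * Real.pi))⁻¹ * Real.exp (-(x - μ) ^ 2 / 2)))
      = (Real.sqrt (2 * Real.sqrt Real.pi * 2 ^ j * (Nat.factorial j : ℝ)))⁻¹
        * Real.exp (-(x ^ 2) / 4) * x ^ j := by
  have hsquare : ∀ μ : ℝ, exp (-μ ^ 2 / 2) * exp (-(x - μ) ^ 2 / 2)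
      = exp (-x ^ 2 / 4) * exp (-(μ - x / 2) ^ 2) := by
    intro μ; rw [← exp_add, ← exp_add]; ring_nf
  have hintegrand : ∀ μ : ℝ,
      hermiteFun j μ * ((√(2 * π))⁻¹ * exp (-(x - μ) ^ 2 / 2))
        = (√(2 ^ j * (j.factorial : ℝ) * √π))⁻¹ * (√(2 * π))⁻¹ * exp (-x ^ 2 / 4)
          * ((physHermitePoly j).eval μ * exp (-(μ - x / 2) ^ 2)) := by
    intro μ
    rw [hermiteFun, physHermite_eq_eval]
    linear_combination (√(2 ^ j * (j.factorial : ℝ) * √π))⁻¹ * (√(2 * π))⁻¹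
      * (physHermitePoly j).eval μ * hsquare μ
  simp_rw [hintegrand]
  rw [integral_const_mul, integral_physHermitePoly_eval_mul_exp_neg_sub_sq,
    mul_div_cancel₀ x two_ne_zero,
    ← inv_sqrt_mul_inv_sqrt_mul_sqrt_pi (by positivity : (0 : ℝ) ≤ 2 ^ j) j.factorial.cast_nonneg]
  ring
end

section
/- For the minimax affine estimation problem, the worst-case MSE proxy at δ satisfies ω'(δ)²/m + (ω(δ) - δω'(δ))²/4 ≥ ω(2/√m)²/8, provided the modulus ω is concave, nondecreasing, nonnegative, and ω' is a supergradient of ω at δ. -/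
/-! Evaluate the supergradient inequality at `t = 2/√m`: the tangent line
`d ↦ (ω δ - δ ω') + ω' d` dominates the nonnegative value `ω t`, and squaring with
`(a + b)² ≤ 2(a² + b²)` turns `ω' t` into `ω'² · 4/m`. -/

lemma sq_le_two_mul_of_nonneg_of_le_affine {y a b t : ℝ} (hy : 0 ≤ y) (h : y ≤ a + b * t) :
    y ^ 2 ≤ 2 * (a ^ 2 + b ^ 2 * t ^ 2) :=
  calc y ^ 2 ≤ (a + b * t) ^ 2 := pow_le_pow_left₀ hy h 2
    _ ≤ 2 * (a ^ 2 + (b * t) ^ 2) := add_sq_le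
    _ = 2 * (a ^ 2 + b ^ 2 * t ^ 2) := by ring

lemma two_div_sqrt_sq {m : ℝ} (hm : 0 ≤ m) : (2 / Real.sqrt m) ^ 2 = 4 / m := by
  rw [div_pow, Real.sq_sqrt hm]
  norm_num

theorem stmt17_general (ω : ℝ → ℝ) (δ ω' m : ℝ)
    (hm : 1 ≤ m)
    (hnonneg : ∀ d : ℝ, 0 < d → 0 ≤ ω d)
    (hsuper : ∀ d : ℝ, 0 < d → ω d ≤ ω δ + ω' * (d - δ)) :
    ω (2 / Real.sqrt m) ^ 2 / 8 ≤ ω' ^ 2 / m + (ω δ - δ * ω') ^ 2 / 4 := by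
  have hm0 : 0 < m := by linarith
  set t := 2 / Real.sqrt m
  have ht : 0 < t := by positivity
  have htangent : ω t ≤ (ω δ - δ * ω') + ω' * t := by linarith [hsuper t ht]
  have key := sq_le_two_mul_of_nonneg_of_le_affine (hnonneg t ht) htangent
  rw [two_div_sqrt_sq hm0.le] at key
  have h4 : ω' ^ 2 * (4 / m) = 4 * (ω' ^ 2 / m) := by ring
  linarith

/-- Lower bound for the worst-case MSE proxy: if `ω : (0,∞) → [0,∞)` is concave,
nondecreasing and nonnegative, with supergradient `ω' ≥ 0` at `δ > 0`, and `m ≥ 1`,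
then `ω'²/m + (ω(δ) - δω')²/4 ≥ ω(2/√m)²/8`. -/
theorem stmt17 (ω : ℝ → ℝ) (δ ω' m : ℝ)
    (hδ : 0 < δ) (hm : 1 ≤ m)
    (hnonneg : ∀ d : ℝ, 0 < d → 0 ≤ ω d)
    (hmono : MonotoneOn ω (Set.Ioi (0 : ℝ)))
    (hconc : ConcaveOn ℝ (Set.Ioi (0 : ℝ)) ω)
    (hω' : 0 ≤ ω')
    (hsuper : ∀ d : ℝ, 0 < d → ω d ≤ ω δ + ω' * (d - δ)) :
    ω (2 / Real.sqrt m) ^ 2 / 8 ≤ ω' ^ 2 / m + (ω δ - δ * ω') ^ 2 / 4 :=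
  stmt17_general ω δ ω' m hm hnonneg hsuper
end
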